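/- arXiv:1211.4999 — 2 statements merged into one kernel-verified Lean document; each statement's English description precedes it below -/
import Mathlib

section
/- For every nonempty set M ⊆ C and every k ∈ {1,…,m}, p_M^{(k)} = ∑_{A⊆C, |M∩A|=m−k+1} q_M^↓(A)·φ(A) − ∑_{A⊆C, |M∩A|=m−k} q_M^↑(A)·φ(A). -/
open MeasureTheory Finset

/-- Lifetime of the (sub)system on component set `D` with structure function `χ`
(the maximum over the sets `A ⊆ D` with `χ A = 1` of `min_{i ∈ A} T i`). -/
noncomputable def sysLifeOn {Ω : Type*} {n : ℕ} (T : Fin n → Ω → ℝ)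
    (D : Finset (Fin n)) (χ : Finset (Fin n) → ℝ) (ω : Ω) : ℝ :=
  if h : (D.powerset.filter fun A => χ A = 1).Nonempty then
    (D.powerset.filter fun A => χ A = 1).sup' h
      (fun A => if hA : A.Nonempty then A.inf' hA fun i => T i ω else 0)
  else 0

/-- The `k`-th order statistic of the lifetimes `(T i)_{i ∈ M}`. -/
noncomputable def orderStat {Ω : Type*} {n : ℕ} (T : Fin n → Ω → ℝ)
    (M : Finset (Fin n)) (k : ℕ) (ω : Ω) : ℝ :=
  ((M.val.map fun i => T i ω).sort (· ≤ ·)).getD (k - 1) 0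

/-- The relative quality function `q_j(A) = Pr(max_{i ∈ C∖A} T_i = T_j < min_{i ∈ A} T_i)`. -/
noncomputable def relQual {Ω : Type*} [MeasurableSpace Ω] {n : ℕ} (μ : Measure Ω)
    (T : Fin n → Ω → ℝ) (j : Fin n) (A : Finset (Fin n)) : ℝ :=
  (μ {ω | (∀ i ∉ A, T i ω ≤ T j ω) ∧ ∀ i ∈ A, T j ω < T i ω}).toReal

/-!
Almost surely the lifetimes are distinct. For distinct lifetimes `t`, the system fails exactly when
the unique component `j` fails that is critical for the set `aboveSet t j` of components outliving
it (`φ = 0` on that set, `φ = 1` once `j` is added), and `T_{k:M} = T_j` iff `j ∈ M` and exactly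
`m - k` components of `M` outlive `j`. Hence `p_M^(k) = ∑ q_j(B)` over `j ∈ M`, `j ∉ B`,
`|M ∩ B| = m - k` with `j` critical for `B`. As `φ (B ∪ {j}) - φ B` is the indicator of
criticality, this is `∑ q_j(B) (φ (B ∪ {j}) - φ B)`, and substituting `A = B ∪ {j}` in the first
half gives the formula.
-/

open Function

section Critical

variable {ι : Type*} [DecidableEq ι]

def IsCritical (φ : Finset ι → ℝ) (j : ι) (B : Finset ι) : Prop :=
  φ B = 0 ∧ φ (insert j B) = 1

noncomputable instance (φ : Finset ι → ℝ) (j : ι) (B : Finset ι) : Decidable (IsCritical φ j B) :=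
  inferInstanceAs (Decidable (_ ∧ _))

lemma sub_eq_ite_isCritical {φ : Finset ι → ℝ} (hφ01 : ∀ A, φ A = 0 ∨ φ A = 1) (hφ : Monotone φ)
    (j : ι) (B : Finset ι) : φ (insert j B) - φ B = if IsCritical φ j B then 1 else 0 := by
  have hle := hφ (subset_insert j B)
  rcases hφ01 B with h | h <;> rcases hφ01 (insert j B) with h' | h' <;>
    simp [IsCritical, h, h', ← not_lt] at hle ⊢

end Critical

section AboveSet

variable {ι α : Type*} [Fintype ι] [LinearOrder α]

def aboveSet (t : ι → α) (j : ι) : Finset ι := {i | t j < t i}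

@[simp] lemma mem_aboveSet {t : ι → α} {i j : ι} : i ∈ aboveSet t j ↔ t j < t i := by
  simp [aboveSet]

lemma eq_aboveSet_iff {t : ι → α} {j : ι} {B : Finset ι} :
    B = aboveSet t j ↔ (∀ i ∉ B, t i ≤ t j) ∧ ∀ i ∈ B, t j < t i := by
  constructor
  · rintro rfl
    simp
  · rintro ⟨hout, hin⟩
    ext i
    simp only [mem_aboveSet]
    exact ⟨hin i, fun h => by_contra fun hi => (hout i hi).not_gt h⟩

variable [DecidableEq ι]

lemma insert_aboveSet_subset_aboveSet {t : ι → α} {a b : ι} (h : t a < t b) :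
    insert b (aboveSet t b) ⊆ aboveSet t a := by
  intro i hi
  rcases mem_insert.1 hi with rfl | hi
  · exact mem_aboveSet.2 h
  · exact mem_aboveSet.2 (h.trans (mem_aboveSet.1 hi))

lemma subset_insert_aboveSet {t : ι → α} (ht : Injective t) {s : Finset ι} {b : ι}
    (hb : ∀ i ∈ s, t b ≤ t i) : s ⊆ insert b (aboveSet t b) := by
  intro i hi
  rcases eq_or_ne i b with rfl | hne
  · exact mem_insert_self _ _
  · exact mem_insert_of_mem (mem_aboveSet.2 ((hb i hi).lt_of_ne fun h => hne (ht h.symm)))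

variable {φ : Finset ι → ℝ}

lemma eq_of_isCritical_aboveSet {t : ι → α} (ht : Injective t) (hφ : Monotone φ) {a b : ι}
    (ha : IsCritical φ a (aboveSet t a)) (hb : IsCritical φ b (aboveSet t b)) : a = b := by
  have key : ∀ {a b}, IsCritical φ a (aboveSet t a) → IsCritical φ b (aboveSet t b) →
      ¬ t a < t b := fun ha hb h => by
    linarith [hφ (insert_aboveSet_subset_aboveSet h), ha.1, hb.2]
  exact ht (le_antisymm (not_lt.1 (key hb ha)) (not_lt.1 (key ha hb)))

lemma exists_isCritical_aboveSet {t : ι → α} (ht : Injective t) (hφ01 : ∀ A, φ A = 0 ∨ φ A = 1)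
    (hφ : Monotone φ) (hφempty : φ ∅ = 0) (hφuniv : φ univ = 1) :
    ∃ j, IsCritical φ j (aboveSet t j) := by
  -- take the last `j` to fail with `φ (insert j (aboveSet t j)) = 1`; were `φ (aboveSet t j) = 1`,
  -- the next component to fail after `j` would qualify as well
  set D : Finset ι := {j | φ (insert j (aboveSet t j)) = 1}
  have hD : D.Nonempty := by
    have huniv : (univ : Finset ι).Nonempty :=
      nonempty_iff_ne_empty.2 fun h => by simp [h, hφempty] at hφuniv
    obtain ⟨a, -, ha⟩ := exists_min_image univ t huniv
    have : insert a (aboveSet t a) = univ :=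
      univ_subset_iff.1 (subset_insert_aboveSet ht fun i _ => ha i (mem_univ i))
    exact ⟨a, by simp [D, this, hφuniv]⟩
  obtain ⟨j, hjD, hjmax⟩ := exists_max_image D t hD
  refine ⟨j, ?_, (mem_filter.1 hjD).2⟩
  rcases (aboveSet t j).eq_empty_or_nonempty with he | hne
  · rw [he, hφempty]
  obtain ⟨b, hb, hbmin⟩ := exists_min_image _ t hne
  refine (hφ01 _).resolve_right fun h1 => (mem_aboveSet.1 hb).not_ge (hjmax b ?_)
  have hle := hφ (subset_insert_aboveSet ht hbmin)
  rw [h1] at hle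
  simpa [D] using (hφ01 _).resolve_left (by linarith)

end AboveSet

section Lifetimes

variable {Ω : Type*} {n : ℕ} {T : Fin n → Ω → ℝ} {ω : Ω}

lemma sysLifeOn_univ_eq_of_isCritical {φ : Finset (Fin n) → ℝ} (hφ : Monotone φ) {j : Fin n}
    (hj : IsCritical φ j (aboveSet (T · ω) j)) : sysLifeOn T univ φ ω = T j ω := by
  have hmem : insert j (aboveSet (T · ω) j) ∈ univ.powerset.filter fun A => φ A = 1 := by
    simp [hj.2]
  rw [sysLifeOn, dif_pos ⟨_, hmem⟩]
  refine le_antisymm (sup'_le _ _ fun A hA => ?_) (le_trans ?_ (le_sup' _ hmem))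
  · have hA : ¬ A ⊆ aboveSet (T · ω) j := fun h => by
      linarith [hφ h, (mem_filter.1 hA).2, hj.1]
    obtain ⟨i, hiA, hij⟩ := not_subset.1 hA
    rw [dif_pos ⟨i, hiA⟩]
    exact (inf'_le _ hiA).trans (not_lt.1 (by simpa using hij))
  · rw [dif_pos ⟨j, mem_insert_self _ _⟩]
    refine le_inf' _ _ fun i hi => ?_
    rcases mem_insert.1 hi with rfl | hi
    · rfl
    · exact (mem_aboveSet.1 hi).le

lemma card_filter_lt_orderEmbOfFin {β : Type*} [LinearOrder β] (s : Finset β) {m : ℕ}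
    (h : #s = m) (q : Fin m) : #{x ∈ s | s.orderEmbOfFin h q < x} = m - 1 - q := by
  set e := s.orderEmbOfFin h
  have hs : univ.map e.toEmbedding = s := map_orderEmbOfFin_univ s h
  rw [← hs, filter_map, card_map, ← Fin.card_Ioi]
  congr 1
  ext
  simp

lemma orderStat_eq_orderEmbOfFin {M : Finset (Fin n)} (ht : Injective (T · ω)) {k : ℕ}
    (hk1 : 1 ≤ k) (hkm : k ≤ #M) :
    orderStat T M k ω = (M.image (T · ω)).orderEmbOfFin (card_image_of_injective M ht)
      ⟨k - 1, by omega⟩ := by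
  rw [orderStat, orderEmbOfFin_apply, ← image_val_of_injOn ht.injOn, sort_val,
    List.getD_eq_getElem _ _ (by simp [card_image_of_injective M ht]; omega)]
  rfl

lemma card_inter_aboveSet {M : Finset (Fin n)} (ht : Injective (T · ω)) (j : Fin n) :
    #(M ∩ aboveSet (T · ω) j) = #{x ∈ M.image (T · ω) | T j ω < x} := by
  rw [filter_image, card_image_of_injective _ ht]
  congr 1
  ext
  simp

lemma orderStat_eq_iff {M : Finset (Fin n)} (ht : Injective (T · ω)) {k : ℕ} (hk1 : 1 ≤ k)
    (hkm : k ≤ #M) {j : Fin n} :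
    orderStat T M k ω = T j ω ↔ j ∈ M ∧ #(M ∩ aboveSet (T · ω) j) = #M - k := by
  rw [orderStat_eq_orderEmbOfFin ht hk1 hkm, card_inter_aboveSet ht]
  set e := (M.image (T · ω)).orderEmbOfFin (card_image_of_injective M ht)
  constructor
  · intro h
    refine ⟨ht.mem_finset_image.1 (h ▸ orderEmbOfFin_mem _ _ _), ?_⟩
    rw [← h, card_filter_lt_orderEmbOfFin]
    simp only
    omega
  · rintro ⟨hj, hcard⟩
    obtain ⟨q, hq⟩ : T j ω ∈ Set.range e := by
      rw [range_orderEmbOfFin]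
      exact mem_image_of_mem _ hj
    rw [← hq, card_filter_lt_orderEmbOfFin] at hcard
    rw [← hq]
    congr 1
    ext
    simp only
    omega

lemma sysLifeOn_eq_orderStat_iff {φ : Finset (Fin n) → ℝ} {M : Finset (Fin n)}
    (ht : Injective (T · ω)) (hφ01 : ∀ A, φ A = 0 ∨ φ A = 1) (hφ : Monotone φ)
    (hφempty : φ ∅ = 0) (hφuniv : φ univ = 1) {k : ℕ} (hk1 : 1 ≤ k) (hkm : k ≤ #M) :
    sysLifeOn T univ φ ω = orderStat T M k ω ↔
      ∃ j ∈ M, #(M ∩ aboveSet (T · ω) j) = #M - k ∧ IsCritical φ j (aboveSet (T · ω) j) := by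
  obtain ⟨j₀, hj₀⟩ := exists_isCritical_aboveSet ht hφ01 hφ hφempty hφuniv
  rw [sysLifeOn_univ_eq_of_isCritical hφ hj₀, eq_comm, orderStat_eq_iff ht hk1 hkm]
  constructor
  · rintro ⟨hj, hcard⟩
    exact ⟨j₀, hj, hcard, hj₀⟩
  · rintro ⟨j, hj, hcard, hjc⟩
    obtain rfl := eq_of_isCritical_aboveSet ht hφ hjc hj₀
    exact ⟨hj, hcard⟩

end Lifetimes

section Probability

variable {Ω : Type*} [MeasurableSpace Ω] {μ : Measure Ω}

lemma measure_eq_sum_of_ae_existsUnique {ι : Type*} {X : Set Ω} {P : Finset ι} {E : ι → Set Ω}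
    (hE : ∀ p ∈ P, NullMeasurableSet (E p) μ) (hX : ∀ᵐ ω ∂μ, ω ∈ X ↔ ∃ p ∈ P, ω ∈ E p)
    (hunique : ∀ᵐ ω ∂μ, ∀ p ∈ P, ∀ q ∈ P, ω ∈ E p → ω ∈ E q → p = q) :
    μ X = ∑ p ∈ P, μ (E p) := by
  rw [← measure_biUnion_finset₀ _ hE]
  · refine measure_congr (Filter.eventuallyEq_set.2 ?_)
    filter_upwards [hX] with ω hω
    simpa using hω
  · intro p hp q hq hpq
    refine measure_eq_zero_iff_ae_notMem.2 ?_
    filter_upwards [hunique] with ω hω hpq'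
    exact hpq (hω p hp q hq hpq'.1 hpq'.2)

lemma ae_injective_of_measure_eq_zero {ι β : Type*} [Countable ι] {T : ι → Ω → β}
    (hties : ∀ i j, i ≠ j → μ {ω | T i ω = T j ω} = 0) : ∀ᵐ ω ∂μ, Injective (T · ω) := by
  simp only [Injective, ae_all_iff]
  intro i j
  by_cases h : i = j
  · exact .of_forall fun _ _ => h
  · filter_upwards [measure_eq_zero_iff_ae_notMem.1 (hties i j h)] with ω hω heq
    exact absurd heq hω

variable {n : ℕ} {T : Fin n → Ω → ℝ}

lemma relQual_eq_measure_aboveSet (j : Fin n) (B : Finset (Fin n)) :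
    relQual μ T j B = (μ {ω | aboveSet (T · ω) j = B}).toReal := by
  simp only [relQual, eq_comm (b := B), eq_aboveSet_iff]

lemma measurableSet_aboveSet_eq (hT : ∀ i, Measurable (T i)) (j : Fin n) (B : Finset (Fin n)) :
    MeasurableSet {ω | aboveSet (T · ω) j = B} := by
  simp only [eq_comm (b := B), eq_aboveSet_iff, Set.ofPred_and, Set.ofPred_forall]
  exact (MeasurableSet.iInter fun i => .iInter fun _ => measurableSet_le (hT i) (hT j)).inter
    (MeasurableSet.iInter fun i => .iInter fun _ => measurableSet_lt (hT j) (hT i))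

lemma measure_sysLifeOn_eq_orderStat (hT : ∀ i, Measurable (T i))
    (hties : ∀ i j, i ≠ j → μ {ω | T i ω = T j ω} = 0) {φ : Finset (Fin n) → ℝ}
    (hφ01 : ∀ A, φ A = 0 ∨ φ A = 1) (hφ : Monotone φ) (hφempty : φ ∅ = 0) (hφuniv : φ univ = 1)
    {M : Finset (Fin n)} {k : ℕ} (hk1 : 1 ≤ k) (hkm : k ≤ #M) :
    μ {ω | sysLifeOn T univ φ ω = orderStat T M k ω} =
      ∑ p ∈ (M ×ˢ univ).filter (fun p => p.1 ∉ p.2 ∧ #(M ∩ p.2) = #M - k ∧ IsCritical φ p.1 p.2),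
        μ {ω | aboveSet (T · ω) p.1 = p.2} := by
  refine measure_eq_sum_of_ae_existsUnique
    (fun p _ => (measurableSet_aboveSet_eq hT p.1 p.2).nullMeasurableSet) ?_ ?_
  · filter_upwards [ae_injective_of_measure_eq_zero hties] with ω ht
    rw [sysLifeOn_eq_orderStat_iff ht hφ01 hφ hφempty hφuniv hk1 hkm]
    constructor
    · rintro ⟨j, hj, hcard, hcrit⟩
      exact ⟨(j, aboveSet (T · ω) j), by simp [hj, hcard, hcrit], rfl⟩
    · rintro ⟨⟨j, B⟩, hp, (rfl : aboveSet (T · ω) j = B)⟩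
      simp only [mem_filter, mem_product, mem_univ, and_true] at hp
      exact ⟨j, hp.1, hp.2.2⟩
  · filter_upwards [ae_injective_of_measure_eq_zero hties] with ω ht
    rintro ⟨j, B⟩ hp ⟨j', B'⟩ hq (rfl : aboveSet (T · ω) j = B) (rfl : aboveSet (T · ω) j' = B')
    simp only [mem_filter] at hp hq
    obtain rfl := eq_of_isCritical_aboveSet ht hφ hp.2.2.2 hq.2.2.2
    rfl

end Probability

section Combinatorics

variable {ι : Type*} [Fintype ι] [DecidableEq ι] (f : ι → Finset ι → ℝ) (φ : Finset ι → ℝ)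
  (M : Finset ι) (r : ℕ)

lemma sum_filter_card_inter_eq :
    ∑ A ∈ univ.powerset.filter (fun A => #(M ∩ A) = r), (∑ j ∈ M \ A, f j A) * φ A =
      ∑ j ∈ M, ∑ B ∈ univ.filter (fun B => j ∉ B ∧ #(M ∩ B) = r), f j B * φ B := by
  simp_rw [sum_mul]
  exact sum_comm' fun A j => by
    simp only [powerset_univ, mem_filter, mem_univ, true_and, mem_sdiff]; tauto

lemma sum_filter_card_inter_eq_succ :
    ∑ A ∈ univ.powerset.filter (fun A => #(M ∩ A) = r + 1), (∑ j ∈ M ∩ A, f j (A \ {j})) * φ A =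
      ∑ j ∈ M, ∑ B ∈ univ.filter (fun B => j ∉ B ∧ #(M ∩ B) = r), f j B * φ (insert j B) := by
  simp_rw [sum_mul]
  rw [sum_comm' (t' := M) (s' := fun j => univ.filter fun A => j ∈ A ∧ #(M ∩ A) = r + 1)
    fun A j => by simp only [powerset_univ, mem_filter, mem_univ, true_and, mem_inter]; tauto]
  refine sum_congr rfl fun j hj => sum_nbij' (·.erase j) (insert j) ?_ ?_ ?_ ?_ ?_
  · intro A hA
    simp only [mem_filter, mem_univ, true_and] at hA ⊢
    rw [inter_erase, card_erase_of_mem (mem_inter.2 ⟨hj, hA.1⟩), hA.2]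
    simp
  · intro B hB
    simp only [mem_filter, mem_univ, true_and] at hB ⊢
    rw [inter_insert_of_mem hj, card_insert_of_notMem fun h => hB.1 (mem_inter.1 h).2, hB.2]
    simp
  · intro A hA
    exact insert_erase (mem_filter.1 hA).2.1
  · intro B hB
    exact erase_insert (mem_filter.1 hB).2.1
  · intro A hA
    rw [← erase_eq, insert_erase (mem_filter.1 hA).2.1]

end Combinatorics

theorem stmt_4_general {Ω : Type*} [MeasurableSpace Ω] (μ : Measure Ω) [IsProbabilityMeasure μ]
    {n : ℕ} (T : Fin n → Ω → ℝ) (hTmeas : ∀ i, Measurable (T i))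
    (hties : ∀ i j : Fin n, i ≠ j → μ {ω | T i ω = T j ω} = 0)
    (φ : Finset (Fin n) → ℝ)
    (hφ01 : ∀ A, φ A = 0 ∨ φ A = 1)
    (hφmono : ∀ A B : Finset (Fin n), A ⊆ B → φ A ≤ φ B)
    (hφempty : φ ∅ = 0) (hφfull : φ Finset.univ = 1)
    (M : Finset (Fin n)) (k : ℕ) (hk1 : 1 ≤ k) (hkm : k ≤ M.card) :
    (μ {ω | sysLifeOn T Finset.univ φ ω = orderStat T M k ω}).toReal =
      (∑ A ∈ (Finset.univ : Finset (Fin n)).powerset.filter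
          (fun A => (M ∩ A).card = M.card - k + 1),
        (∑ j ∈ M ∩ A, relQual μ T j (A \ {j})) * φ A)
      -
      (∑ A ∈ (Finset.univ : Finset (Fin n)).powerset.filter
          (fun A => (M ∩ A).card = M.card - k),
        (∑ j ∈ M \ A, relQual μ T j A) * φ A) := by
  have hφ : Monotone φ := fun A B => hφmono A B
  rw [sum_filter_card_inter_eq_succ, sum_filter_card_inter_eq, ← sum_sub_distrib,
    measure_sysLifeOn_eq_orderStat hTmeas hties hφ01 hφ hφempty hφfull hk1 hkm,
    ENNReal.toReal_sum fun _ _ => measure_ne_top _ _,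
    sum_finset_product _ M (fun j => (univ.filter fun B => j ∉ B ∧ #(M ∩ B) = #M - k).filter
      (IsCritical φ j)) (by simp [and_assoc])]
  refine sum_congr rfl fun j _ => ?_
  rw [sum_filter, ← sum_sub_distrib]
  refine sum_congr rfl fun B _ => ?_
  rw [← mul_sub, sub_eq_ite_isCritical hφ01 hφ, mul_ite, mul_one, mul_zero,
    relQual_eq_measure_aboveSet]

theorem stmt_4 {Ω : Type*} [MeasurableSpace Ω] (μ : Measure Ω) [IsProbabilityMeasure μ]
    {n : ℕ} (T : Fin n → Ω → ℝ) (hTmeas : ∀ i, Measurable (T i))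
    (hTnonneg : ∀ i ω, 0 ≤ T i ω)
    (hties : ∀ i j : Fin n, i ≠ j → μ {ω | T i ω = T j ω} = 0)
    (φ : Finset (Fin n) → ℝ)
    (hφ01 : ∀ A, φ A = 0 ∨ φ A = 1)
    (hφmono : ∀ A B : Finset (Fin n), A ⊆ B → φ A ≤ φ B)
    (hφempty : φ ∅ = 0) (hφfull : φ Finset.univ = 1)
    (M : Finset (Fin n)) (hM : M.Nonempty) (k : ℕ) (hk1 : 1 ≤ k) (hkm : k ≤ M.card) :
    (μ {ω | sysLifeOn T Finset.univ φ ω = orderStat T M k ω}).toReal =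
      (∑ A ∈ (Finset.univ : Finset (Fin n)).powerset.filter
          (fun A => (M ∩ A).card = M.card - k + 1),
        (∑ j ∈ M ∩ A, relQual μ T j (A \ {j})) * φ A)
      -
      (∑ A ∈ (Finset.univ : Finset (Fin n)).powerset.filter
          (fun A => (M ∩ A).card = M.card - k),
        (∑ j ∈ M \ A, relQual μ T j A) * φ A) :=
  stmt_4_general μ T hTmeas hties φ hφ01 hφmono hφempty hφfull M k hk1 hkm
end

section
/- For every component j ∈ C, the Barlow-Proschan index satisfies I_BP^{(j)} = ∑_{A⊆C} d(A)·Pr(T_j = min_{i∈A} T_i). -/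
open MeasureTheory Finset

/-- `min_{i ∈ A} T i` (with junk value `0` when `A = ∅`). -/
noncomputable def minLifeOn {Ω : Type*} {n : ℕ} (T : Fin n → Ω → ℝ)
    (A : Finset (Fin n)) (ω : Ω) : ℝ :=
  if h : A.Nonempty then A.inf' h fun i => T i ω else 0

/-- The signed domination function `d(A) = ∑_{B ⊆ A} (-1)^{|A|-|B|} φ(B)`. -/
noncomputable def signedDom {n : ℕ} (φ : Finset (Fin n) → ℝ) (A : Finset (Fin n)) : ℝ :=
  ∑ B ∈ A.powerset, (-1 : ℝ) ^ (A.card - B.card) * φ B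

/-!
Off the null event of ties, let `O` be the set of components that outlive `j`. Then
`T_C = T_j` exactly when `O ∪ {j}` contains a path set but `O` does not, so by monotonicity
`1{T_C = T_j} = φ(O ∪ {j}) - φ(O)`. On the other side, `T_j = min_{i ∈ A} T_i` exactly when
`j ∈ A ⊆ O ∪ {j}`, so `∑_A d(A) 1{T_j = min_A T} = ∑_{A ⊆ O} d(A ∪ {j})`, which Möbius inversion
on the Boolean lattice evaluates to the same `φ(O ∪ {j}) - φ(O)`. Taking expectations of this
almost sure identity gives the formula.
-/

section SignedDomination

variable {n : ℕ}

theorem signedDom_insert (φ : Finset (Fin n) → ℝ) {a : Fin n} {A : Finset (Fin n)}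
    (ha : a ∉ A) :
    signedDom φ (insert a A) = signedDom (fun C => φ (insert a C) - φ C) A := by
  unfold signedDom
  rw [sum_powerset_insert ha, card_insert_of_notMem ha, ← sum_add_distrib]
  refine sum_congr rfl fun C hC => ?_
  have hCA := mem_powerset.1 hC
  have hcard : A.card + 1 - C.card = A.card - C.card + 1 := by
    have := card_le_card hCA; omega
  rw [card_insert_of_notMem (fun h => ha (hCA h)), hcard, Nat.add_sub_add_right, pow_succ]
  ring

theorem sum_powerset_signedDom (φ : Finset (Fin n) → ℝ) (S : Finset (Fin n)) :
    ∑ A ∈ S.powerset, signedDom φ A = φ S := by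
  induction S using Finset.induction_on generalizing φ with
  | empty => simp [signedDom]
  | insert a S ha ih =>
    rw [sum_powerset_insert ha, ih,
      sum_congr rfl fun A hA => signedDom_insert φ (fun h => ha (mem_powerset.1 hA h)), ih]
    ring

theorem sum_powerset_signedDom_insert (φ : Finset (Fin n) → ℝ) {a : Fin n} {S : Finset (Fin n)}
    (ha : a ∉ S) :
    ∑ A ∈ S.powerset, signedDom φ (insert a A) = φ (insert a S) - φ S := by
  rw [sum_congr rfl fun A hA => signedDom_insert φ (fun h => ha (mem_powerset.1 hA h)),
    sum_powerset_signedDom]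

end SignedDomination

theorem exists_subset_eq_one_iff {α : Type*} {φ : Finset α → ℝ}
    (hφ01 : ∀ A, φ A = 0 ∨ φ A = 1) (hφmono : ∀ A B, A ⊆ B → φ A ≤ φ B) (S : Finset α) :
    (∃ A ⊆ S, φ A = 1) ↔ φ S = 1 :=
  ⟨fun ⟨A, hAS, hA⟩ => (hφ01 S).resolve_left fun h => by linarith [hφmono A S hAS],
    fun h => ⟨S, subset_rfl, h⟩⟩

section Lifetimes

variable {Ω : Type*} {n : ℕ} (T : Fin n → Ω → ℝ) (j : Fin n) (ω : Ω)

/-- The components still working when component `j` fails. -/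
noncomputable def outliving : Finset (Fin n) :=
  univ.filter fun i => T j ω < T i ω

theorem notMem_outliving : j ∉ outliving T j ω := by
  simp [outliving]

variable {T j ω}

theorem lt_minLifeOn_iff {A : Finset (Fin n)} (hA : A.Nonempty) :
    T j ω < minLifeOn T A ω ↔ A ⊆ outliving T j ω := by
  rw [minLifeOn, dif_pos hA, lt_inf'_iff]
  simp [outliving, subset_iff]

theorem le_minLifeOn_iff (hinj : Function.Injective fun i => T i ω) {A : Finset (Fin n)}
    (hA : A.Nonempty) :
    T j ω ≤ minLifeOn T A ω ↔ A ⊆ insert j (outliving T j ω) := by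
  rw [minLifeOn, dif_pos hA, le_inf'_iff, subset_iff]
  simp only [le_iff_eq_or_lt, hinj.eq_iff, mem_insert, outliving, mem_filter, mem_univ, true_and,
    @eq_comm _ j]

theorem eq_minLifeOn_iff (hinj : Function.Injective fun i => T i ω) {A : Finset (Fin n)}
    (hA : A.Nonempty) :
    T j ω = minLifeOn T A ω ↔ j ∈ A ∧ A ⊆ insert j (outliving T j ω) := by
  rw [eq_iff_le_not_lt, le_minLifeOn_iff hinj hA, lt_minLifeOn_iff hA, and_comm]
  refine and_congr_left fun hsub => ⟨fun h => ?_, fun hj h => notMem_outliving T j ω (h hj)⟩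
  by_contra hj
  exact h ((subset_insert_iff_of_notMem hj).1 hsub)

theorem sysLifeOn_univ_eq_iff {φ : Finset (Fin n) → ℝ} (hφ01 : ∀ A, φ A = 0 ∨ φ A = 1)
    (hφmono : ∀ A B, A ⊆ B → φ A ≤ φ B) (hφempty : φ ∅ = 0) (hφfull : φ univ = 1)
    (hinj : Function.Injective fun i => T i ω) :
    sysLifeOn T univ φ ω = T j ω ↔
      φ (insert j (outliving T j ω)) = 1 ∧ φ (outliving T j ω) = 0 := by
  set F := univ.powerset.filter fun A => φ A = 1
  have hmem {A : Finset (Fin n)} : A ∈ F ↔ φ A = 1 := by simp [F]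
  have hF : F.Nonempty := ⟨univ, hmem.2 hφfull⟩
  have hFne {A : Finset (Fin n)} (hA : A ∈ F) : A.Nonempty :=
    nonempty_iff_ne_empty.2 (by rintro rfl; simp [hmem, hφempty] at hA)
  have hle : (∀ A ∈ F, minLifeOn T A ω ≤ T j ω) ↔ ¬∃ A ⊆ outliving T j ω, φ A = 1 := by
    simp only [not_exists, not_and]
    refine forall_congr' fun A => ⟨fun h hsub hA => ?_, fun h hA => not_lt.1 fun hlt => ?_⟩
    · exact (h (hmem.2 hA)).not_gt ((lt_minLifeOn_iff (hFne (hmem.2 hA))).2 hsub)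
    · exact h ((lt_minLifeOn_iff (hFne hA)).1 hlt) (hmem.1 hA)
  have hge : (∃ A ∈ F, T j ω ≤ minLifeOn T A ω) ↔ ∃ A ⊆ insert j (outliving T j ω), φ A = 1 :=
    ⟨fun ⟨A, hA, h⟩ => ⟨A, (le_minLifeOn_iff hinj (hFne hA)).1 h, hmem.1 hA⟩,
      fun ⟨A, hsub, hA⟩ => ⟨A, hmem.2 hA, (le_minLifeOn_iff hinj (hFne (hmem.2 hA))).2 hsub⟩⟩
  rw [sysLifeOn, dif_pos hF]
  change F.sup' hF (fun A => minLifeOn T A ω) = T j ω ↔ _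
  rw [le_antisymm_iff, sup'_le_iff, le_sup'_iff, hle, hge, exists_subset_eq_one_iff hφ01 hφmono,
    exists_subset_eq_one_iff hφ01 hφmono, and_comm]
  exact and_congr_right fun _ => ⟨(hφ01 _).resolve_right, fun h => by rw [h]; norm_num⟩

theorem ite_sysLifeOn_univ_eq {φ : Finset (Fin n) → ℝ} (hφ01 : ∀ A, φ A = 0 ∨ φ A = 1)
    (hφmono : ∀ A B, A ⊆ B → φ A ≤ φ B) (hφempty : φ ∅ = 0) (hφfull : φ univ = 1)
    (hinj : Function.Injective fun i => T i ω) :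
    (if sysLifeOn T univ φ ω = T j ω then 1 else 0 : ℝ) =
      φ (insert j (outliving T j ω)) - φ (outliving T j ω) := by
  simp only [sysLifeOn_univ_eq_iff hφ01 hφmono hφempty hφfull hinj]
  rcases hφ01 (outliving T j ω) with h₀ | h₀
  · rcases hφ01 (insert j (outliving T j ω)) with h₁ | h₁ <;> simp [h₀, h₁]
  · have h₁ : φ (insert j (outliving T j ω)) = 1 := (hφ01 _).resolve_left fun h => by
      linarith [hφmono _ _ (subset_insert j (outliving T j ω))]
    simp [h₀, h₁]

theorem sum_signedDom_mul_ite_eq_minLifeOn {φ : Finset (Fin n) → ℝ} (hφempty : φ ∅ = 0)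
    (hinj : Function.Injective fun i => T i ω) :
    ∑ A ∈ (univ : Finset (Fin n)).powerset,
        signedDom φ A * (if T j ω = minLifeOn T A ω then 1 else 0) =
      φ (insert j (outliving T j ω)) - φ (outliving T j ω) := by
  have hterm (A : Finset (Fin n)) :
      signedDom φ A * (if T j ω = minLifeOn T A ω then 1 else 0) =
        if j ∈ A ∧ A ⊆ insert j (outliving T j ω) then signedDom φ A else 0 := by
    rcases A.eq_empty_or_nonempty with rfl | hA
    -- `minLifeOn T ∅ = 0` is a junk value, but it is weighted by `signedDom φ ∅ = φ ∅ = 0`.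
    · simp [signedDom, hφempty]
    · simp only [eq_minLifeOn_iff hinj hA, mul_ite, mul_one, mul_zero]
  simp only [hterm]
  rw [← sum_subset (powerset_mono.2 (subset_univ _)) fun A _ hA => if_neg fun h =>
      hA (mem_powerset.2 h.2),
    sum_powerset_insert (notMem_outliving T j ω),
    sum_eq_zero fun A hA => if_neg fun h => notMem_outliving T j ω (mem_powerset.1 hA h.1)]
  simp only [mem_insert_self, true_and, zero_add]
  rw [sum_congr rfl fun A hA => if_pos (insert_subset_insert j (mem_powerset.1 hA)),
    sum_powerset_signedDom_insert φ (notMem_outliving T j ω)]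

end Lifetimes

section Measurability

variable {Ω : Type*} [MeasurableSpace Ω] {n : ℕ} {T : Fin n → Ω → ℝ}

theorem measurable_minLifeOn (hT : ∀ i, Measurable (T i)) (A : Finset (Fin n)) :
    Measurable (minLifeOn T A) := by
  by_cases hA : A.Nonempty
  · have h : minLifeOn T A = A.inf' hA T := by
      ext ω; rw [minLifeOn, dif_pos hA, Finset.inf'_apply]
    rw [h]
    exact inf'_induction hA T (fun _ hf _ hg => hf.inf hg) fun i _ => hT i
  · rw [show minLifeOn T A = fun _ => 0 from funext fun _ => dif_neg hA]
    exact measurable_const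

theorem measurable_sysLifeOn (hT : ∀ i, Measurable (T i)) (D : Finset (Fin n))
    (χ : Finset (Fin n) → ℝ) : Measurable (sysLifeOn T D χ) := by
  by_cases hF : (D.powerset.filter fun A => χ A = 1).Nonempty
  · have h : sysLifeOn T D χ = (D.powerset.filter fun A => χ A = 1).sup' hF (minLifeOn T) := by
      ext ω; rw [sysLifeOn, dif_pos hF, Finset.sup'_apply]; rfl
    rw [h]
    exact measurable_sup' hF fun A _ => measurable_minLifeOn hT A
  · rw [show sysLifeOn T D χ = fun _ => 0 from funext fun _ => dif_neg hF]
    exact measurable_const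

end Measurability

theorem ae_injective_of_measure_eq_zero_s7 {Ω ι β : Type*} [MeasurableSpace Ω] [Countable ι]
    {μ : Measure Ω} {X : ι → Ω → β} (h : ∀ i k, i ≠ k → μ {ω | X i ω = X k ω} = 0) :
    ∀ᵐ ω ∂μ, Function.Injective fun i => X i ω := by
  have hpair (i k : ι) : ∀ᵐ ω ∂μ, X i ω = X k ω → i = k := by
    by_cases hik : i = k
    · exact ae_of_all μ fun _ _ => hik
    · filter_upwards [measure_eq_zero_iff_ae_notMem.1 (h i k hik)] with ω hω heq
      exact absurd heq hω
  filter_upwards [ae_all_iff.2 fun i => ae_all_iff.2 (hpair i)] with ω hω i k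
  exact hω i k

theorem stmt_7_general {Ω : Type*} [MeasurableSpace Ω] (μ : Measure Ω) [IsProbabilityMeasure μ]
    {n : ℕ} (T : Fin n → Ω → ℝ) (hTmeas : ∀ i, Measurable (T i))
    (hties : ∀ i j : Fin n, i ≠ j → μ {ω | T i ω = T j ω} = 0)
    (φ : Finset (Fin n) → ℝ)
    (hφ01 : ∀ A, φ A = 0 ∨ φ A = 1)
    (hφmono : ∀ A B : Finset (Fin n), A ⊆ B → φ A ≤ φ B)
    (hφempty : φ ∅ = 0) (hφfull : φ Finset.univ = 1)
    (j : Fin n) :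
    (μ {ω | sysLifeOn T Finset.univ φ ω = T j ω}).toReal =
      ∑ A ∈ (Finset.univ : Finset (Fin n)).powerset,
        signedDom φ A * (μ {ω | T j ω = minLifeOn T A ω}).toReal := by
  have hsys : MeasurableSet {ω | sysLifeOn T univ φ ω = T j ω} :=
    measurableSet_eq_fun (measurable_sysLifeOn hTmeas univ φ) (hTmeas j)
  have hmin (A : Finset (Fin n)) : MeasurableSet {ω | T j ω = minLifeOn T A ω} :=
    measurableSet_eq_fun (hTmeas j) (measurable_minLifeOn hTmeas A)
  have hae : {ω | sysLifeOn T univ φ ω = T j ω}.indicator 1 =ᵐ[μ] fun ω =>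
      ∑ A ∈ (univ : Finset (Fin n)).powerset,
        signedDom φ A * {ω | T j ω = minLifeOn T A ω}.indicator 1 ω := by
    filter_upwards [ae_injective_of_measure_eq_zero_s7 hties] with ω hinj
    simp only [Set.indicator_apply, Set.mem_ofPred_eq, Pi.one_apply]
    rw [ite_sysLifeOn_univ_eq hφ01 hφmono hφempty hφfull hinj,
      sum_signedDom_mul_ite_eq_minLifeOn hφempty hinj]
  rw [← measureReal_def, ← integral_indicator_one hsys, integral_congr_ae hae,
    integral_finsetSum _ fun A _ => ((integrable_const 1).indicator (hmin A)).const_mul _]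
  simp only [integral_const_mul, integral_indicator_one (hmin _), measureReal_def]

theorem stmt_7 {Ω : Type*} [MeasurableSpace Ω] (μ : Measure Ω) [IsProbabilityMeasure μ]
    {n : ℕ} (T : Fin n → Ω → ℝ) (hTmeas : ∀ i, Measurable (T i))
    (hTnonneg : ∀ i ω, 0 ≤ T i ω)
    (hties : ∀ i j : Fin n, i ≠ j → μ {ω | T i ω = T j ω} = 0)
    (φ : Finset (Fin n) → ℝ)
    (hφ01 : ∀ A, φ A = 0 ∨ φ A = 1)
    (hφmono : ∀ A B : Finset (Fin n), A ⊆ B → φ A ≤ φ B)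
    (hφempty : φ ∅ = 0) (hφfull : φ Finset.univ = 1)
    (j : Fin n) :
    (μ {ω | sysLifeOn T Finset.univ φ ω = T j ω}).toReal =
      ∑ A ∈ (Finset.univ : Finset (Fin n)).powerset,
        signedDom φ A * (μ {ω | T j ω = minLifeOn T A ω}).toReal :=
  stmt_7_general μ T hTmeas hties φ hφ01 hφmono hφempty hφfull j
end
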